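/- arXiv:2008.00976 — 5 statements merged into one kernel-verified Lean document; each statement's English description precedes it below -/
import Mathlib

section
/- Let G be a group, H a subgroup of G, and let g = (g₁,…,g_n) and ĝ = (ĝ₁,…,ĝ_n) be n-tuples of elements of G. Suppose the full derivatives of the two tuples coincide, i.e., for every j ∈ {1,…,n} (indices taken cyclically, so g_{n+1} = g₁) the subsets g_j⁻¹ H g_{j+1} and ĝ_j⁻¹ H ĝ_{j+1} of G are equal. Then θ := ĝ₁ g₁⁻¹ normalizes H, and for every j, H ĝ_j = H θ g_j; that is, the tuple of right cosets (Hĝ₁,…,Hĝ_n) is obtained from (Hg₁,…,Hg_n) by left multiplication by θ. -/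
/-!
Put `t j := g'ⱼ gⱼ⁻¹`. Equality of the `j`-th derivatives says exactly that `x ↦ tⱼ x t_{j+1}⁻¹`
maps `H` onto `H`. Taking `x = 1` gives `tⱼ t_{j+1}⁻¹ ∈ H`, and then `tⱼ x tⱼ⁻¹` differs from
`tⱼ x t_{j+1}⁻¹` by an element of `H`, so every `tⱼ` normalizes `H`. Moreover the right cosets
`H tⱼ` agree for consecutive indices, hence, going around the cycle, they all equal `H t₀`,
which gives `H g'ⱼ = H tⱼ gⱼ = H t₀ gⱼ`.
-/

open Pointwise

open Fin.NatCast in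
theorem Fin.apply_eq_apply_zero_of_forall_apply_add_one {α : Type*} {n : ℕ} [NeZero n]
    {f : Fin n → α} (hf : ∀ j, f (j + 1) = f j) (j : Fin n) : f j = f 0 := by
  suffices ∀ k : ℕ, f k = f 0 by simpa using this j
  intro k
  induction k with
  | zero => simp
  | succ k ih => rw [Nat.cast_succ, hf, ih]

namespace Subgroup

variable {G : Type*} [Group G] {H : Subgroup G}

theorem mem_image_mul_mul_iff {a b z : G} :
    z ∈ (fun x => a * x * b) '' (H : Set G) ↔ a⁻¹ * z * b⁻¹ ∈ H := by
  constructor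
  · rintro ⟨x, hx, rfl⟩
    simpa [mul_assoc] using hx
  · exact fun hz => ⟨_, hz, by group⟩

theorem mul_mul_inv_mem_iff_of_image_eq {a b a' b' : G}
    (h : (fun x => a⁻¹ * x * b) '' (H : Set G) = (fun x => a'⁻¹ * x * b') '' (H : Set G))
    (x : G) : a' * a⁻¹ * x * (b' * b⁻¹)⁻¹ ∈ H ↔ x ∈ H := by
  have hz := congrArg (a⁻¹ * x * b ∈ ·) h
  simp only [mem_image_mul_mul_iff, inv_inv, eq_iff_iff] at hz
  rw [show a' * a⁻¹ * x * (b' * b⁻¹)⁻¹ = a' * (a⁻¹ * x * b) * b'⁻¹ by group, ← hz]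
  simp [mul_assoc]

variable {a b : G}

theorem mul_mem_of_forall_mul_mul_mem_iff (h : ∀ x, a * x * b ∈ H ↔ x ∈ H) : a * b ∈ H := by
  simpa using (h 1).2 H.one_mem

theorem mem_normalizer_of_forall_mul_mul_mem_iff (h : ∀ x, a * x * b ∈ H ↔ x ∈ H) :
    a ∈ normalizer (H : Set G) := by
  refine mem_normalizer_iff.2 fun x => (h x).symm.trans ?_
  rw [show a * x * b = a * x * a⁻¹ * (a * b) by group]
  exact H.mul_mem_cancel_right (mul_mem_of_forall_mul_mul_mem_iff h)

theorem mul_singleton_eq_mul_singleton_iff {x y : G} :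
    (H : Set G) * {x} = H * {y} ↔ y * x⁻¹ ∈ H := by
  rw [Set.mul_singleton, Set.mul_singleton]
  exact rightCoset_eq_iff H

end Subgroup

/-- Let `H ≤ G` and let `g, g' : Fin n → G` be two `n`-tuples (indices taken
cyclically).  If the full derivatives coincide, i.e. `gⱼ⁻¹ H g_{j+1} = g'ⱼ⁻¹ H g'_{j+1}` for
all `j`, then `θ := g'₀ g₀⁻¹` normalizes `H` and `H g'ⱼ = H (θ gⱼ)` for every `j`, i.e. the
tuple of right cosets of `g'` is obtained from that of `g` by left multiplication by `θ`. -/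
theorem stmt_3 {G : Type*} [Group G] (H : Subgroup G) {n : ℕ} [NeZero n]
    (g g' : Fin n → G)
    (hder : ∀ j : Fin n,
      (fun h => (g j)⁻¹ * h * g (j + 1)) '' (H : Set G) =
        (fun h => (g' j)⁻¹ * h * g' (j + 1)) '' (H : Set G)) :
    g' 0 * (g 0)⁻¹ ∈ Subgroup.normalizer (H : Set G) ∧
      ∀ j : Fin n, (H : Set G) * {g' j} = (H : Set G) * {g' 0 * (g 0)⁻¹ * g j} := by
  set t : Fin n → G := fun j => g' j * (g j)⁻¹
  have ht : ∀ j x, t j * x * (t (j + 1))⁻¹ ∈ H ↔ x ∈ H := fun j => Subgroup.mul_mul_inv_mem_iff_of_image_eq (hder j)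
  have hcoset : ∀ j, (H : Set G) * {t j} = H * {t 0} :=
    Fin.apply_eq_apply_zero_of_forall_apply_add_one fun j =>
      Subgroup.mul_singleton_eq_mul_singleton_iff.2
        (Subgroup.mul_mem_of_forall_mul_mul_mem_iff (ht j))
  refine ⟨Subgroup.mem_normalizer_of_forall_mul_mul_mem_iff (ht 0), fun j => ?_⟩
  have hj := Subgroup.mul_singleton_eq_mul_singleton_iff.1 (hcoset j)
  rw [Subgroup.mul_singleton_eq_mul_singleton_iff]
  simpa [t, mul_assoc] using hj
end

section
/- Let G be a group, H a subgroup of G, g = (g₁,…,g_n) an n-tuple in G, σ a permutation of {1,…,n}, and h = (h₁,…,h_n), h′ = (h′₁,…,h′_n) n-tuples of elements of H. Suppose that for every i ∈ {1,…,n} (indices cyclic, so g_{n+1} = g₁ and g_{σ(n+1)} = g_{σ(1)}) one has g_i⁻¹ h_i g_{i+1} = g_{σ(i)}⁻¹ h′_i g_{σ(i+1)}. Then for every i ∈ {1,…,n}, g_{σ(1)} g₁⁻¹ h₁ h₂ ⋯ h_{i-1} g_i = h′₁ h′₂ ⋯ h′_{i-1} g_{σ(i)}. In particular, if u := g_{σ(1)}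 g₁⁻¹ normalizes H, then H u g_i = H g_{σ(i)} for every i, i.e., left multiplication of the tuple (Hg₁,…,Hg_n) by u yields the same tuple of right H-cosets as the σ-permuted tuple (Hg_{σ(1)},…,Hg_{σ(n)}). -/
open Pointwise

/-!
The hypothesis says that `g` and `g ∘ σ` have the same derivative along `h` and `h'`.
Multiplying these identities for the indices below `i` telescopes to
`g₀⁻¹ h₀ ⋯ h_{i-1} gᵢ = g_{σ 0}⁻¹ h'₀ ⋯ h'_{i-1} g_{σ i}`. With `u = g_{σ 0} g₀⁻¹`,
`P = h₀ ⋯ h_{i-1}` and `Q = h'₀ ⋯ h'_{i-1}` this reads `u P gᵢ = Q g_{σ i}`, hence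
`g_{σ i} (u gᵢ)⁻¹ = Q⁻¹ (u P u⁻¹)`, which lies in `H` as soon as `u` normalizes `H`.
-/

theorem List.filter_finRange_lt_succ {n : ℕ} (i : Fin n) :
    (List.finRange (n + 1)).filter (· < i.succ) =
      (List.finRange (n + 1)).filter (· < i.castSucc) ++ [i.castSucc] := by
  have sorted := (List.sortedLT_finRange (n + 1)).pairwise
  refine List.Pairwise.eq_of_mem_iff (r := (· < ·)) (sorted.filter _) ?_ fun a => ?_
  · exact List.pairwise_append.2 ⟨sorted.filter _, by simp, by simp⟩
  · simp only [List.mem_filter, List.mem_finRange, List.mem_append, List.mem_singleton,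
      decide_eq_true_eq, true_and, Fin.lt_def, Fin.ext_iff, Fin.val_succ,
      Fin.val_castSucc]
    omega

section Derivative

variable {G : Type*} [Group G] {n : ℕ}

def tupleDerivative [NeZero n] (g h : Fin n → G) (i : Fin n) : G :=
  (g i)⁻¹ * h i * g (i + 1)

def prefixProd (h : Fin n → G) (i : Fin n) : G :=
  (((List.finRange n).filter (· < i)).map h).prod

@[simp]
theorem prefixProd_zero [NeZero n] (h : Fin n → G) : prefixProd h 0 = 1 := by
  simp [prefixProd]

theorem prefixProd_succ (h : Fin (n + 1) → G) (i : Fin n) :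
    prefixProd h i.succ = prefixProd h i.castSucc * h i.castSucc := by
  simp [prefixProd, List.filter_finRange_lt_succ]

theorem prefixProd_mem {H : Subgroup G} {h : Fin n → G} (hh : ∀ i, h i ∈ H) (i : Fin n) :
    prefixProd h i ∈ H :=
  H.list_prod_mem <| by simpa using fun j _ => hh j

theorem mul_prefixProd_mul_eq_of_tupleDerivative_eq [NeZero n] {g g' h h' : Fin n → G}
    (hyp : tupleDerivative g h = tupleDerivative g' h') (i : Fin n) :
    g' 0 * (g 0)⁻¹ * prefixProd h i * g i = prefixProd h' i * g' i := by
  obtain ⟨m, rfl⟩ := Nat.exists_eq_succ_of_ne_zero (NeZero.ne n)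
  induction i using Fin.induction with
  | zero => simp
  | succ i ih =>
    have step := congrFun hyp i.castSucc
    simp only [tupleDerivative, Fin.coeSucc_eq_succ] at step
    calc g' 0 * (g 0)⁻¹ * prefixProd h i.succ * g i.succ
        = (g' 0 * (g 0)⁻¹ * prefixProd h i.castSucc * g i.castSucc) *
            ((g i.castSucc)⁻¹ * h i.castSucc * g i.succ) := by
          rw [prefixProd_succ]; group
      _ = (prefixProd h' i.castSucc * g' i.castSucc) *
            ((g' i.castSucc)⁻¹ * h' i.castSucc * g' i.succ) := by rw [ih, step]
      _ = prefixProd h' i.succ * g' i.succ := by rw [prefixProd_succ]; group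

end Derivative

theorem Subgroup.coe_mul_singleton_eq_iff {G : Type*} [Group G] (H : Subgroup G) {x y : G} :
    (H : Set G) * {x} = H * {y} ↔ y * x⁻¹ ∈ H := by
  simp only [Set.mul_singleton]
  exact rightCoset_eq_iff H

theorem Subgroup.coe_mul_singleton_mul_eq_of_mem_normalizer {G : Type*} [Group G]
    {H : Subgroup G} {u p q x y : G}
    (hu : u ∈ normalizer (H : Set G)) (hp : p ∈ H) (hq : q ∈ H) (hxy : u * p * x = q * y) :
    (H : Set G) * {u * x} = H * {y} := by
  rw [coe_mul_singleton_eq_iff]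
  have : y * (u * x)⁻¹ = q⁻¹ * (u * p * u⁻¹) := by
    rw [show y = q⁻¹ * (u * p * x) by rw [hxy]; group]; group
  rw [this]
  exact mul_mem (inv_mem hq) ((mem_normalizer_iff.mp hu p).mp hp)

/-- Let `H ≤ G`, `g : Fin n → G` an `n`-tuple, `σ` a permutation of `Fin n`
and `h, h' : Fin n → H` tuples such that the derivative of `g` along `h` equals the
derivative of the `σ`-permuted tuple along `h'` (indices cyclic):
`gᵢ⁻¹ hᵢ g_{i+1} = g_{σ(i)}⁻¹ h'ᵢ g_{σ(i+1)}` for all `i`.  Then for every `i`,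
`g_{σ(0)} g₀⁻¹ h₀ ⋯ h_{i-1} gᵢ = h'₀ ⋯ h'_{i-1} g_{σ(i)}`.  In particular, if
`u := g_{σ(0)} g₀⁻¹` normalizes `H`, then `H (u gᵢ) = H g_{σ(i)}` for every `i`. -/
theorem stmt_4 {G : Type*} [Group G] (H : Subgroup G) {n : ℕ} [NeZero n]
    (g : Fin n → G) (σ : Equiv.Perm (Fin n)) (h h' : Fin n → G)
    (hh : ∀ i, h i ∈ H) (hh' : ∀ i, h' i ∈ H)
    (hyp : ∀ i : Fin n,
      (g i)⁻¹ * h i * g (i + 1) = (g (σ i))⁻¹ * h' i * g (σ (i + 1))) :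
    (∀ i : Fin n,
      g (σ 0) * (g 0)⁻¹ * (((List.finRange n).filter (fun j => j < i)).map h).prod * g i =
        (((List.finRange n).filter (fun j => j < i)).map h').prod * g (σ i)) ∧
    (g (σ 0) * (g 0)⁻¹ ∈ Subgroup.normalizer (H : Set G) →
      ∀ i : Fin n,
        (H : Set G) * {g (σ 0) * (g 0)⁻¹ * g i} = (H : Set G) * {g (σ i)}) := by
  have telescope : ∀ i, g (σ 0) * (g 0)⁻¹ * prefixProd h i * g i = prefixProd h' i * g (σ i) :=
    mul_prefixProd_mul_eq_of_tupleDerivative_eq (g' := g ∘ σ) (funext hyp)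
  exact ⟨telescope, fun hu i => Subgroup.coe_mul_singleton_mul_eq_of_mem_normalizer hu
    (prefixProd_mem hh i) (prefixProd_mem hh' i) (telescope i)⟩
end

section
/- Let F be a field of characteristic zero, G a finite group, and A a G-graded F-algebra that is Azumaya (as an ungraded algebra) over its center Z(A). Set R = Z(A)_e = Z(A) ∩ A_e. Then for every ideal 𝔞 of the commutative ring R, one has 𝔞A ∩ R = 𝔞, where 𝔞A denotes the (two-sided) ideal of A generated by 𝔞, i.e., the set of finite sums Σ aᵢxᵢ with aᵢ ∈ 𝔞 and xᵢ ∈ A. -/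
/-!
A faithful finitely generated projective module over a commutative ring has unit trace ideal
(Nakayama), so `A` admits a `Z(A)`-linear retraction `p : A → Z(A)`. Composing `p` with the
projection onto the identity component of the grading gives a retraction of `A` onto
`Z(A) ∩ A_e = R`: it stays central since the identity component of a central element is central,
and it is `R`-linear because `R ⊆ A_e`. Hence `R` is an `R`-module direct summand of `A`, and
applying the retraction to `a = Σ aᵢ xᵢ ∈ 𝔞A ∩ R` gives `a = Σ aᵢ q(xᵢ) ∈ 𝔞`.
-/
open TensorProduct

noncomputable section

/-- Right multiplication as an algebra homomorphism `Aᵐᵒᵖ →ₐ[R] End R A`. -/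
def rmulAlgHom (R A : Type*) [CommSemiring R] [Semiring A] [Algebra R A] :
    Aᵐᵒᵖ →ₐ[R] Module.End R A where
  toFun a := LinearMap.mulRight R a.unop
  map_one' := by ext x; simp
  map_mul' a b := by ext x; simp [mul_assoc]
  map_zero' := by ext x; simp
  map_add' a b := by ext x; simp [mul_add]
  commutes' r := by ext x; simp [← Algebra.commutes r x, Algebra.smul_def]

/-- The natural map `A ⊗[R] Aᵐᵒᵖ →ₐ[R] End R A` induced by left and right multiplication. -/
def azumayaMap (R A : Type*) [CommRing R] [Ring A] [Algebra R A] :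
    A ⊗[R] Aᵐᵒᵖ →ₐ[R] Module.End R A :=
  Algebra.TensorProduct.lift (Algebra.lmul R A) (rmulAlgHom R A)
    (fun a b => by ext x; simp [rmulAlgHom, mul_assoc])

/-- `A` is an Azumaya algebra over the commutative ring `R`: it is a faithful finitely
generated projective `R`-module and the natural map `A ⊗[R] Aᵐᵒᵖ → End_R A` is bijective. -/
def IsAzumaya' (R A : Type*) [CommRing R] [Ring A] [Algebra R A] : Prop :=
  Module.Projective R A ∧ Module.Finite R A ∧ FaithfulSMul R A ∧
    Function.Bijective (azumayaMap R A)

theorem Module.exists_sum_dual_apply_eq_one (R M : Type*) [CommRing R] [AddCommGroup M]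
    [Module R M] [Module.Finite R M] [Module.Projective R M] [FaithfulSMul R M] :
    ∃ (n : ℕ) (φ : Fin n → Module.Dual R M) (m : Fin n → M), ∑ i, φ i (m i) = 1 := by
  obtain ⟨n, f, g, -, -, hfg⟩ := Module.Finite.exists_comp_eq_id_of_projective R M
  let φ : Fin n → Module.Dual R M := fun i => LinearMap.proj i ∘ₗ g
  -- the trace ideal of `M`; Nakayama and faithfulness force it to be the unit ideal
  let T : Ideal R := LinearMap.range (∑ i, φ i ∘ₗ LinearMap.proj i)
  suffices h1 : (1 : R) ∈ T by
    obtain ⟨m, hm⟩ := h1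
    exact ⟨n, φ, m, by simpa using hm⟩
  have hφT : ∀ i x, φ i x ∈ T := fun i x =>
    ⟨Pi.single i x, by simp [Pi.single_apply, apply_ite]⟩
  have hT : (⊤ : Submodule R M) ≤ T • ⊤ := by
    intro x _
    rw [← LinearMap.id_apply (R := R) x, ← hfg, LinearMap.comp_apply,
      LinearMap.pi_apply_eq_sum_univ]
    exact Submodule.sum_mem _ fun i _ => Submodule.smul_mem_smul (hφT i x) trivial
  obtain ⟨r, hr1, hr0⟩ :=
    Submodule.exists_sub_one_mem_and_smul_eq_zero_of_fg_of_le_smul T ⊤ Module.Finite.fg_top hT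
  have hr : r = 0 := eq_of_smul_eq_smul fun x : M => by rw [hr0 x trivial, zero_smul]
  simpa [hr] using T.neg_mem hr1

theorem Algebra.exists_retraction_of_projective (R A : Type*) [CommRing R] [Ring A]
    [Algebra R A] [Module.Finite R A] [Module.Projective R A] [FaithfulSMul R A] :
    ∃ q : A →ₗ[R] R, ∀ r, q (algebraMap R A r) = r := by
  obtain ⟨n, φ, m, hm⟩ := Module.exists_sum_dual_apply_eq_one R A
  refine ⟨∑ i, φ i ∘ₗ LinearMap.mulRight R (m i), fun r => ?_⟩
  simp [← Algebra.smul_def, ← Finset.mul_sum, hm]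

theorem Algebra.exists_retraction_of_linearMap {R A : Type*} [CommRing R] [Ring A]
    [Algebra R A] (hinj : Function.Injective (algebraMap R A)) (π : A →ₗ[R] A)
    (hrange : ∀ x, π x ∈ Set.range (algebraMap R A))
    (hfix : ∀ r, π (algebraMap R A r) = algebraMap R A r) :
    ∃ q : A →ₗ[R] R, ∀ r, q (algebraMap R A r) = r := by
  let e := LinearEquiv.ofInjective (Algebra.linearMap R A) hinj
  refine ⟨e.symm.toLinearMap ∘ₗ π.codRestrict _ (fun x => LinearMap.mem_range.mpr (hrange x)),
    fun r => e.symm_apply_eq.mpr (Subtype.ext ?_)⟩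
  exact hfix r

namespace DirectSum

variable {G A σ : Type*} [CancelMonoid G] [DecidableEq G] [Semiring A] [SetLike σ A]
  [AddSubmonoidClass σ A] (𝒜 : G → σ) [Decomposition 𝒜]
  (hmul : ∀ g h : G, ∀ x ∈ 𝒜 g, ∀ y ∈ 𝒜 h, x * y ∈ 𝒜 (g * h))
include hmul

theorem coe_decompose_mul_mul_of_left_mem {a : A} {g : G} (ha : a ∈ 𝒜 g) (z : A) (h : G) :
    (decompose 𝒜 (a * z) (g * h) : A) = a * decompose 𝒜 z h := by
  induction z using Decomposition.inductionOn 𝒜 with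
  | zero => simp
  | @homogeneous k z =>
    obtain ⟨z, hz⟩ := z
    by_cases hk : k = h
    · subst hk
      rw [decompose_of_mem_same 𝒜 (hmul _ _ _ ha _ hz), decompose_of_mem_same 𝒜 hz]
    · rw [decompose_of_mem_ne 𝒜 (hmul _ _ _ ha _ hz) (mul_left_cancel.mt hk),
        decompose_of_mem_ne 𝒜 hz hk, mul_zero]
  | add x y hx hy => simp [mul_add, hx, hy]

theorem coe_decompose_mul_mul_of_right_mem {b : A} {g : G} (hb : b ∈ 𝒜 g) (z : A) (h : G) :
    (decompose 𝒜 (z * b) (h * g) : A) = decompose 𝒜 z h * b := by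
  induction z using Decomposition.inductionOn 𝒜 with
  | zero => simp
  | @homogeneous k z =>
    obtain ⟨z, hz⟩ := z
    by_cases hk : k = h
    · subst hk
      rw [decompose_of_mem_same 𝒜 (hmul _ _ _ hz _ hb), decompose_of_mem_same 𝒜 hz]
    · rw [decompose_of_mem_ne 𝒜 (hmul _ _ _ hz _ hb) (mul_right_cancel.mt hk),
        decompose_of_mem_ne 𝒜 hz hk, zero_mul]
  | add x y hx hy => simp [add_mul, hx, hy]

theorem coe_decompose_one_mem_center {z : A} (hz : z ∈ Set.center A) :
    (decompose 𝒜 z 1 : A) ∈ Set.center A := by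
  rw [Semigroup.mem_center_iff]
  intro c
  induction c using Decomposition.inductionOn 𝒜 with
  | zero => simp
  | @homogeneous g c =>
    calc c * (decompose 𝒜 z 1 : A) = decompose 𝒜 (c * z) (g * 1) :=
          (coe_decompose_mul_mul_of_left_mem 𝒜 hmul c.2 z 1).symm
      _ = decompose 𝒜 (z * c) (1 * g) := by
          rw [mul_one, one_mul, Semigroup.mem_center_iff.mp hz c]
      _ = decompose 𝒜 z 1 * c := coe_decompose_mul_mul_of_right_mem 𝒜 hmul c.2 z 1
  | add x y hx hy => rw [add_mul, mul_add, hx, hy]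

end DirectSum

open DirectSum in
theorem exists_retraction_of_graded_center {G R A σ : Type*} [CancelMonoid G] [DecidableEq G]
    [CommRing R] [Ring A] [Algebra R A] [SetLike σ A] [AddSubmonoidClass σ A] (𝒜 : G → σ)
    [Decomposition 𝒜] (hmul : ∀ g h : G, ∀ x ∈ 𝒜 g, ∀ y ∈ 𝒜 h, x * y ∈ 𝒜 (g * h))
    (hinj : Function.Injective (algebraMap R A))
    (hrange : Set.range (algebraMap R A) = {x : A | x ∈ Subring.center A ∧ x ∈ 𝒜 1})
    (p : A →ₗ[Subring.center A] Subring.center A) (hp : ∀ z, p (algebraMap _ A z) = z) :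
    ∃ q : A →ₗ[R] R, ∀ r, q (algebraMap R A r) = r := by
  have hR (r : R) : algebraMap R A r ∈ Subring.center A ∧ algebraMap R A r ∈ 𝒜 1 :=
    hrange.subset ⟨r, rfl⟩
  let π : A →ₗ[R] A :=
    { toFun x := decompose 𝒜 (p x : A) 1
      map_add' x y := by simp
      map_smul' r x := by
        have hrx : r • x = (⟨_, (hR r).1⟩ : Subring.center A) • x := Algebra.smul_def r x
        rw [hrx, map_smul, RingHom.id_apply, Algebra.smul_def r]
        have := coe_decompose_mul_mul_of_left_mem 𝒜 hmul (hR r).2 (p x : A) 1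
        rwa [one_mul] at this }
  refine Algebra.exists_retraction_of_linearMap hinj π (fun x => ?_) (fun r => ?_)
  · rw [hrange]
    exact ⟨coe_decompose_one_mem_center 𝒜 hmul (p x).2, (decompose 𝒜 _ 1).2⟩
  · have hpr : p (algebraMap R A r) = ⟨_, (hR r).1⟩ := hp ⟨_, (hR r).1⟩
    simp [π, hpr, decompose_of_mem_same 𝒜 (hR r).2]

theorem Ideal.comap_map_eq_self_of_retraction {R A : Type*} [CommRing R] [Ring A]
    [Algebra R A] (q : A →ₗ[R] R) (hq : ∀ r, q (algebraMap R A r) = r) (𝔞 : Ideal R) :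
    (𝔞.map (algebraMap R A)).comap (algebraMap R A) = 𝔞 := by
  refine le_antisymm (fun r hr => ?_) Ideal.le_comap_map
  suffices h : ∀ x ∈ 𝔞.map (algebraMap R A), ∀ c : A, q (c * x) ∈ 𝔞 by
    simpa [hq] using h _ hr 1
  intro x hx
  induction hx using Submodule.span_induction with
  | mem x hx =>
    obtain ⟨a, ha, rfl⟩ := hx
    intro c
    rw [← Algebra.commutes, ← Algebra.smul_def, map_smul, smul_eq_mul]
    exact 𝔞.mul_mem_right _ ha
  | zero => simp
  | add x y _ _ hx hy => intro c; rw [mul_add, map_add]; exact add_mem (hx c) (hy c)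
  | smul a x _ hx => intro c; rw [smul_eq_mul, ← mul_assoc]; exact hx _

theorem stmt_6_general {F G A R : Type*} [Field F] [Group G] [DecidableEq G]
    [Ring A] [Algebra F A] [CommRing R] [Algebra R A]
    (𝒜 : G → Submodule F A)
    (hmul : ∀ g h : G, ∀ x ∈ 𝒜 g, ∀ y ∈ 𝒜 h, x * y ∈ 𝒜 (g * h))
    (hint : DirectSum.IsInternal 𝒜)
    (hAz : IsAzumaya' (Subring.center A) A)
    (hRinj : Function.Injective (algebraMap R A))
    (hRrange : Set.range (algebraMap R A) = {x : A | x ∈ Subring.center A ∧ x ∈ 𝒜 1})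
    (𝔞 : Ideal R) :
    Ideal.comap (algebraMap R A) (Ideal.map (algebraMap R A) 𝔞) = 𝔞 := by
  let := hint.chooseDecomposition
  obtain ⟨_, _, _, -⟩ := hAz
  obtain ⟨p, hp⟩ := Algebra.exists_retraction_of_projective (Subring.center A) A
  obtain ⟨q, hq⟩ := exists_retraction_of_graded_center 𝒜 hmul hRinj hRrange p hp
  exact Ideal.comap_map_eq_self_of_retraction q hq 𝔞

/-- `A` is a `G`-graded `F`-algebra (`F` a field of characteristic zero, `G` a
finite group), given by the internal grading `𝒜`, which is Azumaya (as an ungraded algebra)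
over its center.  The commutative ring `R` realizes the `e`-center `Z(A)_e = Z(A) ∩ A_e`
(via the injective map `algebraMap R A` whose range is exactly the `e`-center).  Then for
every ideal `𝔞` of `R` one has `𝔞A ∩ R = 𝔞`, where `𝔞A` is the (two-sided) ideal of `A`
generated by `𝔞`. -/
theorem stmt_6 {F G A R : Type*} [Field F] [CharZero F] [Group G] [Finite G] [DecidableEq G]
    [Ring A] [Algebra F A] [CommRing R] [Algebra R A]
    (𝒜 : G → Submodule F A)
    (hone : (1 : A) ∈ 𝒜 1)
    (hmul : ∀ g h : G, ∀ x ∈ 𝒜 g, ∀ y ∈ 𝒜 h, x * y ∈ 𝒜 (g * h))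
    (hint : DirectSum.IsInternal 𝒜)
    (hAz : IsAzumaya' (Subring.center A) A)
    (hRinj : Function.Injective (algebraMap R A))
    (hRrange : Set.range (algebraMap R A) = {x : A | x ∈ Subring.center A ∧ x ∈ 𝒜 1})
    (𝔞 : Ideal R) :
    Ideal.comap (algebraMap R A) (Ideal.map (algebraMap R A) 𝔞) = 𝔞 :=
  stmt_6_general 𝒜 hmul hint hAz hRinj hRrange 𝔞

end
end

section
/- Let K be a field, G a finite group, and D a G-graded K-algebra which is a G-graded division algebra, i.e., every nonzero homogeneous element of D is invertible. Let p, q ∈ K⟨X_G⟩ be multilinear G-homogeneous polynomials on disjoint sets of variables. If neither p nor q is a G-graded identity of D, then the product pq is not a G-graded identity of D. (Consequently the T-ideal Id_{G,K}(D) has no such homogeneous zero divisors.) -/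
noncomputable section

/-- `p` is a `G`-graded identity of the `G`-graded `K`-algebra `D` (with grading `𝒟`):
every `K`-algebra homomorphism from the free `G`-graded algebra `K⟨X_G⟩` (the free algebra
on the variables `x_{i,g}`, `(i,g) : ℕ × G`) sending each variable `x_{i,g}` into the
homogeneous component `𝒟 g` kills `p`. -/
def IsGIdentity {K : Type*} [CommSemiring K] {G : Type*} {D : Type*} [Semiring D]
    [Algebra K D] (𝒟 : G → Submodule K D) (p : FreeAlgebra K (ℕ × G)) : Prop :=
  ∀ φ : FreeAlgebra K (ℕ × G) →ₐ[K] D,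
    (∀ v : ℕ × G, φ (FreeAlgebra.ι K v) ∈ 𝒟 v.2) → φ p = 0

private lemma prod_mem_aux {K G D : Type*} [Field K] [Group G] [Ring D] [Algebra K D]
    (𝒟 : G → Submodule K D) (hone : (1 : D) ∈ 𝒟 1)
    (hmul : ∀ g h : G, ∀ x ∈ 𝒟 g, ∀ y ∈ 𝒟 h, x * y ∈ 𝒟 (g * h))
    (f : ℕ × G → D) (hf : ∀ v, f v ∈ 𝒟 v.2) :
    ∀ l : List (ℕ × G), (l.map f).prod ∈ 𝒟 (l.map Prod.snd).prod
  | [] => by simpa using hone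
  | v :: l => by
    simp only [List.map_cons, List.prod_cons]
    exact hmul _ _ _ (hf v) _ (prod_mem_aux 𝒟 hone hmul f hf l)

/-- Let `K` be a field, `G` a finite group and `D` a `G`-graded `K`-algebra
which is a `G`-graded division algebra (every nonzero homogeneous element is invertible).
Let `p` and `q` be multilinear `G`-homogeneous polynomials of `K⟨X_G⟩` on disjoint sets of
variables: `p` (resp. `q`) is a `K`-linear combination of monomials `x_{w₁}⋯x_{w_m}`,
`w ∈ Sp` (resp. `w ∈ Sq`), all monomials of `p` (resp. of `q`) have the same homogeneous
degree `gp` (resp. `gq`), every variable occurring in a monomial of `p` (resp. `q`) occurs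
exactly once in each monomial of `p` (resp. `q`), and no variable occurs both in `p` and
in `q`.  If neither `p` nor `q` is a `G`-graded identity of `D`, then neither is `pq`. -/
theorem stmt_12 {K G D : Type*} [Field K] [Group G] [Finite G] [DecidableEq G]
    [Ring D] [Algebra K D]
    (𝒟 : G → Submodule K D)
    (hone : (1 : D) ∈ 𝒟 1)
    (hmul : ∀ g h : G, ∀ x ∈ 𝒟 g, ∀ y ∈ 𝒟 h, x * y ∈ 𝒟 (g * h))
    (hint : DirectSum.IsInternal 𝒟)
    (hdiv : ∀ g : G, ∀ x ∈ 𝒟 g, x ≠ 0 → IsUnit x)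
    (p q : FreeAlgebra K (ℕ × G))
    (Sp Sq : Finset (List (ℕ × G))) (cp cq : List (ℕ × G) → K)
    (hpeq : p = ∑ w ∈ Sp, cp w • (w.map (FreeAlgebra.ι K)).prod)
    (hqeq : q = ∑ w ∈ Sq, cq w • (w.map (FreeAlgebra.ι K)).prod)
    (gp gq : G)
    (hphom : ∀ w ∈ Sp, (w.map Prod.snd).prod = gp)
    (hqhom : ∀ w ∈ Sq, (w.map Prod.snd).prod = gq)
    (hpml : ∀ v : ℕ × G, (∃ w ∈ Sp, v ∈ w) → ∀ w ∈ Sp, w.count v = 1)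
    (hqml : ∀ v : ℕ × G, (∃ w ∈ Sq, v ∈ w) → ∀ w ∈ Sq, w.count v = 1)
    (hdisj : ∀ v : ℕ × G, (∃ w ∈ Sp, v ∈ w) → ¬ ∃ w ∈ Sq, v ∈ w)
    (hp : ¬ IsGIdentity 𝒟 p) (hq : ¬ IsGIdentity 𝒟 q) :
    ¬ IsGIdentity 𝒟 (p * q) := by
  classical
  unfold IsGIdentity at hp hq
  push_neg at hp hq
  obtain ⟨φ, hφ, hφp⟩ := hp
  obtain ⟨ψ, hψ, hψq⟩ := hq
  -- the merged substitution
  set χ : FreeAlgebra K (ℕ × G) →ₐ[K] D :=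
    FreeAlgebra.lift K (fun v => if ∃ w ∈ Sp, v ∈ w then φ (FreeAlgebra.ι K v)
      else ψ (FreeAlgebra.ι K v)) with hχdef
  have hχι : ∀ v : ℕ × G, χ (FreeAlgebra.ι K v) = if ∃ w ∈ Sp, v ∈ w
      then φ (FreeAlgebra.ι K v) else ψ (FreeAlgebra.ι K v) := by
    intro v; rw [hχdef, FreeAlgebra.lift_ι_apply]
  have hχ : ∀ v : ℕ × G, χ (FreeAlgebra.ι K v) ∈ 𝒟 v.2 := by
    intro v; rw [hχι]; split_ifs
    · exact hφ v
    · exact hψ v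
  have key : ∀ (f g : FreeAlgebra K (ℕ × G) →ₐ[K] D) (w : List (ℕ × G)),
      (∀ v ∈ w, f (FreeAlgebra.ι K v) = g (FreeAlgebra.ι K v)) →
      f (w.map (FreeAlgebra.ι K)).prod = g (w.map (FreeAlgebra.ι K)).prod := by
    intro f g w h
    rw [map_list_prod, map_list_prod, List.map_map, List.map_map]
    congr 1
    exact List.map_congr_left h
  have hχp : χ p = φ p := by
    rw [hpeq, map_sum, map_sum]
    refine Finset.sum_congr rfl fun w hw => ?_
    rw [map_smul, map_smul, key χ φ w fun v hv => ?_]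
    rw [hχι, if_pos ⟨w, hw, hv⟩]
  have hχq : χ q = ψ q := by
    rw [hqeq, map_sum, map_sum]
    refine Finset.sum_congr rfl fun w hw => ?_
    rw [map_smul, map_smul, key χ ψ w fun v hv => ?_]
    rw [hχι, if_neg]
    intro hvp
    exact hdisj v hvp ⟨w, hw, hv⟩
  -- homogeneity of the images
  have mem_aux : ∀ (f : FreeAlgebra K (ℕ × G) →ₐ[K] D),
      (∀ v : ℕ × G, f (FreeAlgebra.ι K v) ∈ 𝒟 v.2) →
      ∀ (S : Finset (List (ℕ × G))) (c : List (ℕ × G) → K) (g : G),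
      (∀ w ∈ S, (w.map Prod.snd).prod = g) →
      f (∑ w ∈ S, c w • (w.map (FreeAlgebra.ι K)).prod) ∈ 𝒟 g := by
    intro f hf S c g hg
    rw [map_sum]
    refine Submodule.sum_mem _ fun w hw => ?_
    rw [map_smul]
    refine Submodule.smul_mem _ _ ?_
    rw [map_list_prod, List.map_map]
    have := prod_mem_aux 𝒟 hone hmul (fun v => f (FreeAlgebra.ι K v)) hf w
    rwa [hg w hw] at this
  have hφpm : φ p ∈ 𝒟 gp := by rw [hpeq]; exact mem_aux φ hφ Sp cp gp hphom
  have hψqm : ψ q ∈ 𝒟 gq := by rw [hqeq]; exact mem_aux ψ hψ Sq cq gq hqhom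
  have hnt : Nontrivial D := ⟨⟨φ p, 0, hφp⟩⟩
  have hu : IsUnit (φ p * ψ q) :=
    (hdiv gp _ hφpm hφp).mul (hdiv gq _ hψqm hψq)
  intro h
  have := h χ hχ
  rw [map_mul, hχp, hχq] at this
  exact hu.ne_zero this

end
end

section
/- Let E be a field, G a group, and Λ a finite-dimensional G-graded E-algebra (associative and unital) which is G-graded simple: Λ² ≠ 0 and the only G-graded two-sided ideals of Λ are 0 and Λ. If the identity component Λ_e is a domain (has no nonzero zero divisors), then every nonzero homogeneous element of Λ is invertible; that is, Λ is a G-graded division algebra. -/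
/-- Let `E` be a field, `G` a group and `Λ` a finite-dimensional `G`-graded
`E`-algebra (internal grading `𝒢`) which is `G`-graded simple: `Λ² ≠ 0` and its only
`G`-graded two-sided ideals are `0` and `Λ`.  (A two-sided ideal `I` is `G`-graded if,
whenever a finitely supported sum of homogeneous components lies in `I`, all the
components lie in `I`.)  If the identity component `Λₑ = 𝒢 1` is a domain, then every
nonzero homogeneous element of `Λ` is invertible, i.e. `Λ` is a `G`-graded division
algebra. -/
theorem stmt_13 {E G Λ : Type*} [Field E] [Group G] [DecidableEq G]
    [Ring Λ] [Algebra E Λ] [FiniteDimensional E Λ]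
    (𝒢 : G → Submodule E Λ)
    (hone : (1 : Λ) ∈ 𝒢 1)
    (hmul : ∀ g h : G, ∀ x ∈ 𝒢 g, ∀ y ∈ 𝒢 h, x * y ∈ 𝒢 (g * h))
    (hint : DirectSum.IsInternal 𝒢)
    (hne : ∃ a b : Λ, a * b ≠ 0)
    (hsimple : ∀ I : TwoSidedIdeal Λ,
      (∀ f : G →₀ Λ, (∀ g, f g ∈ 𝒢 g) → (f.sum fun _ a => a) ∈ I → ∀ g, f g ∈ I) →
      I = ⊥ ∨ I = ⊤)
    (hdomain : ∀ x y : Λ, x ∈ 𝒢 1 → y ∈ 𝒢 1 → x * y = 0 → x = 0 ∨ y = 0) :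
    ∀ g : G, ∀ x ∈ 𝒢 g, x ≠ 0 → IsUnit x := by
  classical
  obtain ⟨a₀, b₀, hab₀⟩ := hne
  haveI : Nontrivial Λ := ⟨a₀ * b₀, 0, hab₀⟩
  letI dec : DirectSum.Decomposition 𝒢 := hint.chooseDecomposition
  -- projections
  have πmem : ∀ h z, (DirectSum.decompose 𝒢 z h : Λ) ∈ 𝒢 h := fun h z => SetLike.coe_mem _
  have πsame : ∀ h (z : Λ), z ∈ 𝒢 h → (DirectSum.decompose 𝒢 z h : Λ) = z := fun h z hz =>
    DirectSum.decompose_of_mem_same 𝒢 hz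
  have πne : ∀ h h' (z : Λ), z ∈ 𝒢 h → h ≠ h' → (DirectSum.decompose 𝒢 z h' : Λ) = 0 :=
    fun h h' z hz hne' => DirectSum.decompose_of_mem_ne 𝒢 hz hne'
  have πadd : ∀ h (z w : Λ), (DirectSum.decompose 𝒢 (z + w) h : Λ)
      = (DirectSum.decompose 𝒢 z h : Λ) + (DirectSum.decompose 𝒢 w h : Λ) := fun h z w => by
    rw [DirectSum.decompose_add]; simp
  have πsmul : ∀ h (c : E) (z : Λ), (DirectSum.decompose 𝒢 (c • z) h : Λ)
      = c • (DirectSum.decompose 𝒢 z h : Λ) := fun h c z => by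
    rw [DirectSum.decompose_smul, DFinsupp.smul_apply, Submodule.coe_smul]
  -- the identity component is a division ring
  have hdiv : ∀ u : Λ, u ∈ 𝒢 1 → u ≠ 0 → ∃ v ∈ 𝒢 1, u * v = 1 ∧ v * u = 1 := by
    intro u hu hu0
    have hmem : ∀ z : Λ, z ∈ 𝒢 1 → u * z ∈ 𝒢 1 := fun z hz => by
      simpa using hmul 1 1 u hu z hz
    let f : (𝒢 1) →ₗ[E] (𝒢 1) :=
      { toFun := fun z => ⟨u * (z : Λ), hmem z z.2⟩
        map_add' := fun z w => by ext; simp [mul_add]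
        map_smul' := fun c z => by ext; simp [mul_smul_comm] }
    have hinj : Function.Injective f := by
      intro z w hzw
      have h0 : u * ((z : Λ) - (w : Λ)) = 0 := by
        have := congrArg Subtype.val hzw
        simp only [f, LinearMap.coe_mk, AddHom.coe_mk] at this
        rw [mul_sub, this, sub_self]
      rcases hdomain u _ hu (sub_mem z.2 w.2) h0 with h | h
      · exact absurd h hu0
      · exact Subtype.ext (sub_eq_zero.mp h)
    have hsurj : Function.Surjective f := (LinearMap.injective_iff_surjective).mp hinj
    obtain ⟨v, hv⟩ := hsurj ⟨1, hone⟩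
    have huv : u * (v : Λ) = 1 := congrArg Subtype.val hv
    have hvu : (v : Λ) * u = 1 := by
      have h0 : u * ((v : Λ) * u - 1) = 0 := by
        rw [mul_sub, ← mul_assoc, huv, one_mul, mul_one, sub_self]
      rcases hdomain u _ hu (sub_mem (by simpa using hmul 1 1 (v : Λ) v.2 u hu) hone) h0 with h | h
      · exact absurd h hu0
      · exact sub_eq_zero.mp h
    exact ⟨v, v.2, huv, hvu⟩
  -- main argument
  intro g x hx hx0
  set T : Set Λ := {y | ∃ p q : G, ∃ a b : Λ, a ∈ 𝒢 p ∧ b ∈ 𝒢 q ∧ a * x * b = y} with hT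
  set J : Submodule E Λ := Submodule.span E T with hJ
  have hxT : x ∈ T := ⟨1, 1, 1, 1, hone, hone, by rw [one_mul, mul_one]⟩
  -- T is closed under left/right multiplication by homogeneous elements
  have hTleft : ∀ p (c : Λ), c ∈ 𝒢 p → ∀ y ∈ T, c * y ∈ T := by
    rintro p c hc y ⟨p', q', a, b, ha, hb, rfl⟩
    exact ⟨p * p', q', c * a, b, hmul p p' c hc a ha, hb, by noncomm_ring⟩
  have hTright : ∀ q (c : Λ), c ∈ 𝒢 q → ∀ y ∈ T, y * c ∈ T := by
    rintro q c hc y ⟨p', q', a, b, ha, hb, rfl⟩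
    exact ⟨p', q' * q, a, b * c, ha, hmul q' q b hb c hc, by noncomm_ring⟩
  -- J is a two-sided ideal
  have hJleft : ∀ (r z : Λ), z ∈ J → r * z ∈ J := by
    intro r z hz
    -- first, for y ∈ T
    have step : ∀ y ∈ T, r * y ∈ J := by
      intro y hy
      have hK : (⊤ : Submodule E Λ) ≤ J.comap (LinearMap.mulRight E y) := by
        rw [← hint.submodule_iSup_eq_top]
        refine iSup_le fun p => ?_
        intro c hc
        rw [Submodule.mem_comap, LinearMap.mulRight_apply]
        exact Submodule.subset_span (hTleft p c hc y hy)
      exact hK Submodule.mem_top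
    have : J ≤ J.comap (LinearMap.mulLeft E r) := by
      rw [hJ, Submodule.span_le]
      intro y hy
      exact step y hy
    exact this hz
  have hJright : ∀ (r z : Λ), z ∈ J → z * r ∈ J := by
    intro r z hz
    have step : ∀ y ∈ T, y * r ∈ J := by
      intro y hy
      have hK : (⊤ : Submodule E Λ) ≤ J.comap (LinearMap.mulLeft E y) := by
        rw [← hint.submodule_iSup_eq_top]
        refine iSup_le fun q => ?_
        intro c hc
        rw [Submodule.mem_comap, LinearMap.mulLeft_apply]
        exact Submodule.subset_span (hTright q c hc y hy)
      exact hK Submodule.mem_top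
    have : J ≤ J.comap (LinearMap.mulRight E r) := by
      rw [hJ, Submodule.span_le]
      intro y hy
      exact step y hy
    exact this hz
  -- J is closed under taking homogeneous components
  have hJcomp : ∀ z ∈ J, ∀ h : G, (DirectSum.decompose 𝒢 z h : Λ) ∈ J := by
    intro z hz h
    induction hz using Submodule.span_induction with
    | mem y hy =>
      obtain ⟨p, q, a, b, ha, hb, rfl⟩ := hy
      have hdeg : a * x * b ∈ 𝒢 (p * g * q) := hmul _ q _ (hmul p g a ha x hx) b hb
      by_cases hcase : p * g * q = h
      · rw [← hcase, πsame _ _ hdeg]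
        exact Submodule.subset_span ⟨p, q, a, b, ha, hb, rfl⟩
      · rw [πne _ _ _ hdeg hcase]; exact J.zero_mem
    | zero => rw [show (0 : Λ) = (0 : E) • (0 : Λ) by simp, πsmul]; simp [J.zero_mem]
    | add y w _ _ hy hw => rw [πadd]; exact J.add_mem hy hw
    | smul c y _ hy => rw [πsmul]; exact J.smul_mem c hy
  -- package J as a graded two-sided ideal and apply simplicity
  let I : TwoSidedIdeal Λ := TwoSidedIdeal.mk' J J.zero_mem
    (fun hu hv => J.add_mem hu hv) (fun hu => J.neg_mem hu)
    (fun {r s} hs => hJleft r s hs) (fun {r s} hr => hJright s r hr)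
  have hmemI : ∀ z : Λ, z ∈ I ↔ z ∈ J := fun z => TwoSidedIdeal.mem_mk' _ _ _ _ _ _ z
  have hgraded : ∀ f : G →₀ Λ, (∀ h, f h ∈ 𝒢 h) → (f.sum fun _ a => a) ∈ I → ∀ h, f h ∈ I := by
    intro f hf hsum h
    rw [hmemI] at hsum ⊢
    by_cases hh : h ∈ f.support
    · have key : (DirectSum.decompose 𝒢 (f.sum fun _ a => a) h : Λ) = f h := by
        rw [Finsupp.sum]
        have : (DirectSum.decompose 𝒢 (∑ g' ∈ f.support, f g') h : Λ)
            = ∑ g' ∈ f.support, (DirectSum.decompose 𝒢 (f g') h : Λ) := by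
          rw [DirectSum.decompose_sum, DFinsupp.finset_sum_apply]
          simp
        rw [this]
        rw [Finset.sum_eq_single h]
        · exact πsame h (f h) (hf h)
        · intro g' _ hg'
          exact πne g' h (f g') (hf g') hg'
        · intro hh'; exact absurd hh hh'
      rw [← key]
      exact hJcomp _ hsum h
    · rw [Finsupp.notMem_support_iff.mp hh]; exact J.zero_mem
  have hItop : I = ⊤ := by
    rcases hsimple I hgraded with hbot | htop
    · exfalso
      have : x ∈ I := (hmemI x).mpr (Submodule.subset_span hxT)
      rw [hbot, TwoSidedIdeal.mem_bot] at this
      exact hx0 this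
    · exact htop
  have hone_J : (1 : Λ) ∈ J := by
    rw [← hmemI, hItop]; exact TwoSidedIdeal.mem_top _
  -- find a nonzero homogeneous product a * x * b in the identity component
  have hexists : ∃ y ∈ T, y ∈ 𝒢 1 ∧ y ≠ 0 := by
    by_contra hcon
    push_neg at hcon
    have key : ∀ z ∈ J, (DirectSum.decompose 𝒢 z 1 : Λ) = 0 := by
      intro z hz
      induction hz using Submodule.span_induction with
      | mem y hy =>
        obtain ⟨p, q, a, b, ha, hb, rfl⟩ := hy
        have hdeg : a * x * b ∈ 𝒢 (p * g * q) := hmul _ q _ (hmul p g a ha x hx) b hb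
        by_cases hcase : p * g * q = 1
        · rw [← hcase, πsame _ _ hdeg]
          exact hcon _ ⟨p, q, a, b, ha, hb, rfl⟩ (hcase ▸ hdeg)
        · exact πne _ _ _ hdeg hcase
      | zero => rw [show (0 : Λ) = (0 : E) • (0 : Λ) by simp, πsmul]; simp
      | add y w _ _ hy hw => rw [πadd, hy, hw, add_zero]
      | smul c y _ hy => rw [πsmul, hy, smul_zero]
    have := key 1 hone_J
    rw [πsame 1 1 hone] at this
    exact one_ne_zero this
  obtain ⟨y, ⟨p, q, a, b, ha, hb, rfl⟩, hy1, hy0⟩ := hexists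
  -- degree bookkeeping : p * g * q = 1
  have hdeg : a * x * b ∈ 𝒢 (p * g * q) := hmul _ q _ (hmul p g a ha x hx) b hb
  have hpgq : p * g * q = 1 := by
    by_contra hcase
    have := πne _ _ _ hdeg hcase
    rw [πsame 1 _ hy1] at this
    exact hy0 this
  -- invert a*x*b in the identity component
  obtain ⟨v, hv, hyv, hvy⟩ := hdiv (a * x * b) hy1 hy0
  obtain ⟨l, hl⟩ : ∃ l : Λ, l = v * a := ⟨_, rfl⟩
  have hlxb : l * x * b = 1 := by
    rw [hl, mul_assoc v a x, mul_assoc v (a * x) b]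
    exact hvy
  have hlmem : l ∈ 𝒢 (1 * p) := hl ▸ hmul 1 p v hv a ha
  -- first idempotent ε = b * l * x ∈ 𝒢 1
  have hq : (p * g)⁻¹ = q := inv_eq_of_mul_eq_one_right hpgq
  have hqpg : q * (1 * p) * g = 1 := by rw [← hq]; group
  have hεmem : b * l * x ∈ 𝒢 1 := by
    have := hmul _ g _ (hmul q _ b hb l hlmem) x hx
    rwa [hqpg] at this
  have hεidem : (b * l * x) * (b * l * x) = b * l * x := by
    calc (b * l * x) * (b * l * x) = b * ((l * x * b) * (l * x)) := by noncomm_ring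
    _ = b * (l * x) := by rw [hlxb, one_mul]
    _ = b * l * x := by rw [mul_assoc]
  have hε1 : b * l * x = 1 := by
    have h0 : (b * l * x) * ((b * l * x) - 1) = 0 := by
      rw [mul_sub, hεidem, mul_one, sub_self]
    rcases hdomain _ _ hεmem (sub_mem hεmem hone) h0 with h | h
    · exfalso
      have : l * x = 0 := by
        have := congrArg (fun t => l * x * t) h
        simp only [mul_zero] at this
        calc l * x = (l * x * b) * (l * x) := by rw [hlxb, one_mul]
        _ = l * x * (b * l * x) := by noncomm_ring
        _ = 0 := by rw [h, mul_zero]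
      have h1 : (1 : Λ) = 0 := by rw [← hlxb, this, zero_mul]
      exact one_ne_zero h1
    · exact sub_eq_zero.mp h
  -- second idempotent ε' = x * (b * l) ∈ 𝒢 1
  have hgqp : g * (q * (1 * p)) = 1 := by rw [← hq]; group
  have hε'mem : x * (b * l) ∈ 𝒢 1 := by
    have := hmul g _ x hx _ (hmul q _ b hb l hlmem)
    rwa [hgqp] at this
  have hε'idem : (x * (b * l)) * (x * (b * l)) = x * (b * l) := by
    calc (x * (b * l)) * (x * (b * l)) = x * ((b * l * x) * (b * l)) := by noncomm_ring
    _ = x * (b * l) := by rw [hε1, one_mul]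
  have hε'1 : x * (b * l) = 1 := by
    have h0 : (x * (b * l)) * ((x * (b * l)) - 1) = 0 := by
      rw [mul_sub, hε'idem, mul_one, sub_self]
    rcases hdomain _ _ hε'mem (sub_mem hε'mem hone) h0 with h | h
    · exfalso
      have hx' : x = 0 := by
        calc x = x * (b * l * x) := by rw [hε1, mul_one]
        _ = (x * (b * l)) * x := by noncomm_ring
        _ = 0 := by rw [h, zero_mul]
      exact hx0 hx'
    · exact sub_eq_zero.mp h
  exact ⟨⟨x, b * l, hε'1, hε1⟩, rfl⟩
end
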